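/- arXiv:2303.04138 — 2 statements merged into one kernel-verified Lean document; each statement's English description precedes it below -/
import Mathlib

section
/- (Left-continuity of hypothesis testing optimum.) Let K be a proper cone with unit u, and ρ, σ states of K. Define D(ε) := min{⟨q,σ⟩ : q ∈ K*, 0 ≤ q ≤ u, ⟨q,ρ⟩ ≥ 1−ε} for ε ∈ (0,1]. Then D is left-continuous: for every ε ∈ (0,1] and η > 0 there exists δ > 0 such that for all ε' with ε − δ < ε' < ε, |D(ε) − D(ε')| < η. -/
open scoped RealInnerProductSpace
open Finset

variable {V : Type*} [NormedAddCommGroup V] [InnerProductSpace ℝ V] [FiniteDimensional ℝ V]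

/-- The dual cone of a set `K` in a real inner product space. -/
def dualCone (K : Set V) : Set V := {y | ∀ x ∈ K, 0 ≤ ⟪y, x⟫}

/-- A proper cone: closed under nonnegative scaling, convex with nonempty interior,
and pointed (`K ∩ (−K) = {0}`). -/
structure IsProperCone (K : Set V) : Prop where
  smul_mem : ∀ x ∈ K, ∀ c : ℝ, 0 ≤ c → c • x ∈ K
  convex : Convex ℝ K
  interior_nonempty : (interior K).Nonempty
  pointed : K ∩ (-K) = {0}

/-- The optimal type-II error `D(ε) = inf{⟨q,σ⟩ : 0 ≤ q ≤ u, ⟨q,ρ⟩ ≥ 1−ε}`. -/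
noncomputable def Dopt (K : Set V) (u ρ σ : V) (ε : ℝ) : ℝ :=
  sInf {r | ∃ q : V, q ∈ dualCone K ∧ u - q ∈ dualCone K ∧
      1 - ε ≤ ⟪q, ρ⟫ ∧ r = ⟪q, σ⟫}

/-- Left-continuity of the hypothesis testing optimum. -/
theorem Dopt_left_continuous (K : Set V) (hK : IsProperCone K)
    (u : V) (hu : u ∈ interior (dualCone K))
    (ρ σ : V) (hρ : ρ ∈ K ∧ ⟪u, ρ⟫ = 1) (hσ : σ ∈ K ∧ ⟪u, σ⟫ = 1) :
    ∀ ε ∈ Set.Ioc (0 : ℝ) 1, ∀ η > (0 : ℝ), ∃ δ > (0 : ℝ),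
      ∀ ε' : ℝ, ε - δ < ε' → ε' < ε →
        |Dopt K u ρ σ ε - Dopt K u ρ σ ε'| < η := by
  obtain ⟨hρK, hρu⟩ := hρ
  obtain ⟨hσK, hσu⟩ := hσ
  have huK : u ∈ dualCone K := interior_subset hu
  have hsmul : ∀ q ∈ dualCone K, ∀ c : ℝ, 0 ≤ c → c • q ∈ dualCone K := by
    intro q hq c hc x hx
    rw [real_inner_smul_left]
    exact mul_nonneg hc (hq x hx)
  have hadd : ∀ q ∈ dualCone K, ∀ r ∈ dualCone K, q + r ∈ dualCone K := by
    intro q hq r hr x hx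
    rw [inner_add_left]
    exact add_nonneg (hq x hx) (hr x hx)
  intro ε hε η hη
  obtain ⟨hε0, hε1⟩ := hε
  set S : ℝ → Set ℝ := fun e => {r | ∃ q : V, q ∈ dualCone K ∧ u - q ∈ dualCone K ∧
      1 - e ≤ ⟪q, ρ⟫ ∧ r = ⟪q, σ⟫} with hSdef
  have hDopt : ∀ e, Dopt K u ρ σ e = sInf (S e) := fun e => rfl
  have hne : ∀ e : ℝ, 0 < e → (S e).Nonempty := by
    intro e he
    refine ⟨⟪u, σ⟫, u, huK, ?_, by rw [hρu]; linarith, rfl⟩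
    intro x hx
    simp
  have hbdd : ∀ e : ℝ, BddBelow (S e) := by
    intro e
    refine ⟨0, ?_⟩
    rintro r ⟨q, hq, -, -, rfl⟩
    exact hq σ hσK
  refine ⟨ε * min η 1 / 2, by positivity, ?_⟩
  intro ε' h1 h2
  have hδε : ε * min η 1 / 2 ≤ ε / 2 := by
    have : min η 1 ≤ 1 := min_le_right _ _
    nlinarith
  have hε'0 : 0 < ε' := by linarith
  -- monotonicity : D(ε) ≤ D(ε')
  have hmono : sInf (S ε) ≤ sInf (S ε') := by
    apply csInf_le_csInf (hbdd ε) (hne ε' hε'0)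
    rintro r ⟨q, hq, hq2, hq3, rfl⟩
    exact ⟨q, hq, hq2, by linarith, rfl⟩
  -- pick a near-optimal q for ε
  obtain ⟨a, ⟨q, hqK, huqK, hqρ, rfl⟩, ha⟩ :=
    Real.lt_sInf_add_pos (hne ε hε0) (half_pos hη)
  set t : ℝ := (ε - ε') / ε with htdef
  have ht0 : 0 < t := div_pos (by linarith) hε0
  have htε : t * ε = ε - ε' := by rw [htdef]; field_simp
  have ht1 : t < 1 := by nlinarith
  have htη : t < η / 2 := by
    have h3 : t * ε < ε * min η 1 / 2 := by rw [htε]; linarith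
    have h4 : min η 1 ≤ η := min_le_left _ _
    nlinarith
  -- bounds on ⟪q,σ⟫
  have hqσ1 : ⟪q, σ⟫ ≤ 1 := by
    have := huqK σ hσK
    rw [inner_sub_left, hσu] at this
    linarith
  -- the mixed operator
  set q' : V := (1 - t) • q + t • u with hq'def
  have hq'K : q' ∈ dualCone K :=
    hadd _ (hsmul q hqK _ (by linarith)) _ (hsmul u huK _ ht0.le)
  have hu_q' : u - q' = (1 - t) • (u - q) := by
    rw [hq'def]; module
  have hq'2 : u - q' ∈ dualCone K := by
    rw [hu_q']; exact hsmul _ huqK _ (by linarith)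
  have hinner : ∀ x : V, ⟪q', x⟫ = (1 - t) * ⟪q, x⟫ + t * ⟪u, x⟫ := by
    intro x
    rw [hq'def, inner_add_left, real_inner_smul_left, real_inner_smul_left]
  have hq'ρ : 1 - ε' ≤ ⟪q', ρ⟫ := by
    rw [hinner, hρu]
    nlinarith
  have hle : sInf (S ε') ≤ ⟪q', σ⟫ :=
    csInf_le (hbdd ε') ⟨q', hq'K, hq'2, hq'ρ, rfl⟩
  have hqσ0 : 0 ≤ ⟪q, σ⟫ := hqK σ hσK
  have hq'σ : ⟪q', σ⟫ ≤ ⟪q, σ⟫ + t := by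
    rw [hinner, hσu]
    nlinarith [mul_nonneg ht0.le hqσ0]
  rw [hDopt, hDopt, abs_sub_lt_iff]
  constructor <;> linarith
end

section
/- (Random coding error bound.) Let K be a proper cone with unit u, X a finite alphabet with distribution P_X, states σ_x ∈ K (⟨u,σ_x⟩ = 1), and effects A_x on K with 0 ≤ A_x ≤ u for each x ∈ X. Fix reals s > 1, t > s and a message set Γ of size 2^R. For codewords (x_j)_{j∈Γ} drawn i.i.d. from P_X, suppose for each realization there exists a decoding measurement (m_j)_{j∈Γ} with u − m_j ≤ s(u − A_{x_j}) + tΣ_{i≠j} A_{x_i}. Then the expected average error probability satisfies E[(1/2^R)Σ_j ⟨u − m_j, σ_{x_j}⟩] ≤ s(1 − Σ_x P_X(x)⟨A_x, σ_x⟩) + t·2^R·⟨Σ_{x'} P_X(x')A_{x'}, Σ_x P_X(x)σ_x⟩. -/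
open scoped RealInnerProductSpace
open Finset

variable {V : Type*} [NormedAddCommGroup V] [InnerProductSpace ℝ V] [FiniteDimensional ℝ V]

lemma sum_prod_eq (N : ℕ) {X : Type*} [Fintype X] (g : Fin N → X → ℝ) :
    ∑ c : Fin N → X, ∏ i, g i (c i) = ∏ i, ∑ x, g i x := by
  rw [Finset.prod_univ_sum]
  simp [Fintype.piFinset_univ]

lemma marg_one {N : ℕ} {X : Type*} [Fintype X] [DecidableEq X] (P : X → ℝ)
    (hP1 : ∑ x, P x = 1) (j : Fin N) (f : X → ℝ) :
    ∑ c : Fin N → X, (∏ i, P (c i)) * f (c j) = ∑ x, P x * f x := by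
  have h : ∀ c : Fin N → X, (∏ i, P (c i)) * f (c j)
      = ∏ i, (if i = j then P (c i) * f (c i) else P (c i)) := by
    intro c
    rw [← Finset.mul_prod_erase univ (fun i => (if i = j then P (c i) * f (c i) else P (c i))) (mem_univ j),
        ← Finset.mul_prod_erase univ (fun i => P (c i)) (mem_univ j),
        Finset.prod_congr rfl (fun i hi => if_neg (Finset.ne_of_mem_erase hi))]
    rw [if_pos rfl]; ring
  rw [Finset.sum_congr rfl (fun c _ => h c),
      show (∑ c : Fin N → X, ∏ i, (if i = j then P (c i) * f (c i) else P (c i)))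
        = ∏ i, ∑ x, (if i = j then P x * f x else P x) from
        sum_prod_eq N (fun i x => if i = j then P x * f x else P x),
      ← Finset.mul_prod_erase univ (fun i => ∑ x, if i = j then P x * f x else P x) (mem_univ j)]
  have h2 : ∀ i ∈ univ.erase j, (∑ x, if i = j then P x * f x else P x) = 1 := by
    intro i hi
    rw [Finset.sum_congr rfl (fun x _ => if_neg (Finset.ne_of_mem_erase hi))]
    exact hP1
  rw [Finset.prod_congr rfl h2]
  simp

set_option maxHeartbeats 1000000 in
lemma marg_two_sep {N : ℕ} {X : Type*} [Fintype X] [DecidableEq X] (P : X → ℝ)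
    (hP1 : ∑ x, P x = 1) {i j : Fin N} (hij : i ≠ j) (f g : X → ℝ) :
    ∑ c : Fin N → X, (∏ k, P (c k)) * (f (c i) * g (c j))
      = (∑ x, P x * f x) * (∑ x, P x * g x) := by
  have hjmem : j ∈ univ.erase i := Finset.mem_erase.2 ⟨hij.symm, mem_univ j⟩
  have h : ∀ c : Fin N → X, (∏ k, P (c k)) * (f (c i) * g (c j))
      = ∏ k, (if k = i then P (c k) * f (c k) else if k = j then P (c k) * g (c k) else P (c k)) := by
    intro c
    rw [← Finset.mul_prod_erase univ
          (fun k => (if k = i then P (c k) * f (c k) else if k = j then P (c k) * g (c k) else P (c k)))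
          (mem_univ i),
        ← Finset.mul_prod_erase (univ.erase i)
          (fun k => (if k = i then P (c k) * f (c k) else if k = j then P (c k) * g (c k) else P (c k)))
          hjmem,
        ← Finset.mul_prod_erase univ (fun k => P (c k)) (mem_univ i),
        ← Finset.mul_prod_erase (univ.erase i) (fun k => P (c k)) hjmem]
    have h3 : ∀ k ∈ (univ.erase i).erase j,
        (if k = i then P (c k) * f (c k) else if k = j then P (c k) * g (c k) else P (c k)) = P (c k) := by
      intro k hk
      rw [if_neg (Finset.ne_of_mem_erase (Finset.mem_of_mem_erase hk)),
          if_neg (Finset.ne_of_mem_erase hk)]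
    rw [Finset.prod_congr rfl h3, if_pos rfl, if_neg hij.symm, if_pos rfl]
    ring
  rw [Finset.sum_congr rfl (fun c _ => h c),
      show (∑ c : Fin N → X, ∏ k, (if k = i then P (c k) * f (c k)
            else if k = j then P (c k) * g (c k) else P (c k)))
        = ∏ k, ∑ x, (if k = i then P x * f x else if k = j then P x * g x else P x) from
        sum_prod_eq N (fun k x => if k = i then P x * f x else if k = j then P x * g x else P x),
      ← Finset.mul_prod_erase univ
        (fun k => ∑ x, (if k = i then P x * f x else if k = j then P x * g x else P x)) (mem_univ i),
      ← Finset.mul_prod_erase (univ.erase i)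
        (fun k => ∑ x, (if k = i then P x * f x else if k = j then P x * g x else P x)) hjmem]
  have h2 : ∀ k ∈ (univ.erase i).erase j,
      (∑ x, (if k = i then P x * f x else if k = j then P x * g x else P x)) = 1 := by
    intro k hk
    rw [Finset.sum_congr rfl (fun x _ => by
      rw [if_neg (Finset.ne_of_mem_erase (Finset.mem_of_mem_erase hk)),
          if_neg (Finset.ne_of_mem_erase hk)])]
    exact hP1
  rw [Finset.prod_congr rfl h2]
  simp [if_neg hij.symm]

lemma marg_two {N : ℕ} {X : Type*} [Fintype X] [DecidableEq X] (P : X → ℝ)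
    (hP1 : ∑ x, P x = 1) {i j : Fin N} (hij : i ≠ j) (h : X → X → ℝ) :
    ∑ c : Fin N → X, (∏ k, P (c k)) * h (c i) (c j)
      = ∑ p, ∑ q, P p * P q * h p q := by
  have hrw : ∀ c : Fin N → X, (∏ k, P (c k)) * h (c i) (c j)
      = ∑ p, (∏ k, P (c k)) * ((if c i = p then 1 else 0) * h p (c j)) := by
    intro c
    rw [← Finset.mul_sum]
    congr 1
    have he : ∀ p, (if c i = p then (1:ℝ) else 0) * h p (c j)
        = if c i = p then h p (c j) else 0 := fun p => by split <;> simp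
    rw [Finset.sum_congr rfl fun p _ => he p, Finset.sum_ite_eq]
    simp
  rw [Finset.sum_congr rfl (fun c _ => hrw c), Finset.sum_comm]
  refine Finset.sum_congr rfl (fun p _ => ?_)
  rw [marg_two_sep P hP1 hij (fun x => if x = p then 1 else 0) (fun y => h p y),
      Finset.mul_sum]
  have : (∑ x, P x * if x = p then 1 else 0) = P p := by
    simp [Finset.sum_ite_eq' univ p]
  rw [this]
  exact Finset.sum_congr rfl (fun q _ => by ring)

/-- Random coding error bound: for i.i.d. codewords and decoding measurements
satisfying the good-measurement inequality, the expected average error probability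
satisfies the stated bound. -/
theorem random_coding_bound (K : Set V) (hK : IsProperCone K)
    (u : V) (hu : u ∈ interior (dualCone K))
    {X : Type*} [Fintype X] (P : X → ℝ)
    (hP : (∀ x, 0 ≤ P x) ∧ ∑ x, P x = 1)
    (σ : X → V) (hσ : ∀ x, σ x ∈ K ∧ ⟪u, σ x⟫ = 1)
    (A : X → V) (hA : ∀ x, A x ∈ dualCone K ∧ u - A x ∈ dualCone K)
    (s t : ℝ) (hs : 1 < s) (hts : s < t) (R : ℕ)
    (m : (Fin (2 ^ R) → X) → Fin (2 ^ R) → V)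
    (hm : ∀ c : Fin (2 ^ R) → X,
      (∀ j, m c j ∈ dualCone K ∧ u - m c j ∈ dualCone K) ∧
      (∑ j, m c j = u) ∧
      ∀ j, (s • (u - A (c j)) + t • ∑ i ∈ Finset.univ.erase j, A (c i))
              - (u - m c j) ∈ dualCone K) :
    ∑ c : Fin (2 ^ R) → X, (∏ j, P (c j)) *
        ((1 / (2 ^ R) : ℝ) * ∑ j, ⟪u - m c j, σ (c j)⟫)
      ≤ s * (1 - ∑ x, P x * ⟪A x, σ x⟫)
        + t * (2 ^ R) * ⟪∑ x', P x' • A x', ∑ x, P x • σ x⟫ := by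
  classical
  obtain ⟨hP0, hP1⟩ := hP
  have hE0 : (0:ℝ) < (2:ℝ) ^ R := by positivity
  have ht0 : (0:ℝ) < t := by linarith
  have hQ_expand : (⟪∑ x', P x' • A x', ∑ x, P x • σ x⟫ : ℝ)
      = ∑ p, ∑ q, P p * P q * ⟪A p, σ q⟫ := by
    rw [sum_inner]
    refine Finset.sum_congr rfl (fun p _ => ?_)
    rw [real_inner_smul_left, inner_sum, Finset.mul_sum]
    refine Finset.sum_congr rfl (fun q _ => ?_)
    rw [real_inner_smul_right]; ring
  have hQ0 : (0:ℝ) ≤ ⟪∑ x', P x' • A x', ∑ x, P x • σ x⟫ := by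
    rw [hQ_expand]
    refine Finset.sum_nonneg (fun p _ => Finset.sum_nonneg (fun q _ => ?_))
    exact mul_nonneg (mul_nonneg (hP0 p) (hP0 q)) ((hA p).1 (σ q) (hσ q).1)
  set Q : ℝ := ⟪∑ x', P x' • A x', ∑ x, P x • σ x⟫ with hQdef
  have key : ∀ (c : Fin (2 ^ R) → X) (j : Fin (2 ^ R)),
      (⟪u - m c j, σ (c j)⟫ : ℝ) ≤ s * ⟪u - A (c j), σ (c j)⟫
        + t * ∑ i ∈ Finset.univ.erase j, ⟪A (c i), σ (c j)⟫ := by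
    intro c j
    have h0 := (hm c).2.2 j (σ (c j)) (hσ (c j)).1
    rw [inner_sub_left, inner_add_left, real_inner_smul_left, real_inner_smul_left,
        sum_inner] at h0
    linarith
  have hprod0 : ∀ c : Fin (2 ^ R) → X, 0 ≤ ∏ j, P (c j) :=
    fun c => Finset.prod_nonneg (fun i _ => hP0 _)
  have stepA : ∑ c : Fin (2 ^ R) → X, (∏ j, P (c j)) *
        ((1 / (2 ^ R) : ℝ) * ∑ j, ⟪u - m c j, σ (c j)⟫)
      ≤ ∑ c : Fin (2 ^ R) → X, (∏ j, P (c j)) *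
        ((1 / (2 ^ R) : ℝ) * ∑ j, (s * ⟪u - A (c j), σ (c j)⟫
          + t * ∑ i ∈ Finset.univ.erase j, ⟪A (c i), σ (c j)⟫)) := by
    refine Finset.sum_le_sum (fun c _ => ?_)
    refine mul_le_mul_of_nonneg_left ?_ (hprod0 c)
    refine mul_le_mul_of_nonneg_left ?_ (by positivity)
    exact Finset.sum_le_sum (fun j _ => key c j)
  refine le_trans stepA ?_
  have hS1 : (∑ x, P x * ⟪u - A x, σ x⟫) = 1 - ∑ x, P x * ⟪A x, σ x⟫ := by
    have h : ∀ x, P x * (⟪u - A x, σ x⟫ : ℝ) = P x - P x * ⟪A x, σ x⟫ := by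
      intro x
      rw [inner_sub_left, (hσ x).2]; ring
    rw [Finset.sum_congr rfl (fun x _ => h x), Finset.sum_sub_distrib, hP1]
  have hcard : ∀ j : Fin (2 ^ R), ((Finset.univ.erase j).card : ℝ) = (2:ℝ) ^ R - 1 := by
    intro j
    rw [Finset.card_erase_of_mem (mem_univ j), Finset.card_univ, Fintype.card_fin]
    have h1 : 1 ≤ 2 ^ R := Nat.one_le_two_pow
    push_cast [Nat.cast_sub h1]
    ring
  have margB : ∀ j : Fin (2 ^ R),
      ∑ c : Fin (2 ^ R) → X, (∏ k, P (c k)) * (s * ⟪u - A (c j), σ (c j)⟫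
          + t * ∑ i ∈ Finset.univ.erase j, ⟪A (c i), σ (c j)⟫)
      = s * (1 - ∑ x, P x * ⟪A x, σ x⟫) + t * (((2:ℝ) ^ R - 1) * Q) := by
    intro j
    have split : ∀ c : Fin (2 ^ R) → X,
        (∏ k, P (c k)) * (s * ⟪u - A (c j), σ (c j)⟫
          + t * ∑ i ∈ Finset.univ.erase j, ⟪A (c i), σ (c j)⟫)
        = s * ((∏ k, P (c k)) * ⟪u - A (c j), σ (c j)⟫)
          + t * ∑ i ∈ Finset.univ.erase j, (∏ k, P (c k)) * ⟪A (c i), σ (c j)⟫ := by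
      intro c
      have h1 : (∏ k, P (c k)) * (∑ i ∈ Finset.univ.erase j, (⟪A (c i), σ (c j)⟫ : ℝ))
          = ∑ i ∈ Finset.univ.erase j, (∏ k, P (c k)) * ⟪A (c i), σ (c j)⟫ :=
        Finset.mul_sum _ _ _
      rw [← h1]; ring
    have hterm : ∀ i ∈ Finset.univ.erase j,
        (∑ c : Fin (2 ^ R) → X, (∏ k, P (c k)) * ⟪A (c i), σ (c j)⟫) = Q := by
      intro i hi
      exact Eq.trans
        (marg_two P hP1 (Finset.ne_of_mem_erase hi) (fun x y => ⟪A x, σ y⟫))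
        hQ_expand.symm
    rw [Finset.sum_congr rfl (fun c _ => split c), Finset.sum_add_distrib,
        ← Finset.mul_sum, ← Finset.mul_sum,
        marg_one P hP1 j (fun x => ⟪u - A x, σ x⟫), hS1, Finset.sum_comm,
        Finset.sum_congr rfl hterm, Finset.sum_const, nsmul_eq_mul, hcard j]
  have rearr : ∑ c : Fin (2 ^ R) → X, (∏ k, P (c k)) *
        ((1 / (2 ^ R) : ℝ) * ∑ j, (s * ⟪u - A (c j), σ (c j)⟫
          + t * ∑ i ∈ Finset.univ.erase j, ⟪A (c i), σ (c j)⟫))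
      = (1 / (2 ^ R) : ℝ) * ∑ j : Fin (2 ^ R),
          ∑ c : Fin (2 ^ R) → X, (∏ k, P (c k)) * (s * ⟪u - A (c j), σ (c j)⟫
            + t * ∑ i ∈ Finset.univ.erase j, ⟪A (c i), σ (c j)⟫) := by
    calc ∑ c : Fin (2 ^ R) → X, (∏ k, P (c k)) *
          ((1 / (2 ^ R) : ℝ) * ∑ j, (s * ⟪u - A (c j), σ (c j)⟫
            + t * ∑ i ∈ Finset.univ.erase j, ⟪A (c i), σ (c j)⟫))
        = (1 / (2 ^ R) : ℝ) * ∑ c : Fin (2 ^ R) → X,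
            ∑ j, (∏ k, P (c k)) * (s * ⟪u - A (c j), σ (c j)⟫
              + t * ∑ i ∈ Finset.univ.erase j, ⟪A (c i), σ (c j)⟫) := by
          rw [Finset.mul_sum]
          refine Finset.sum_congr rfl (fun c _ => ?_)
          rw [Finset.mul_sum, Finset.mul_sum, Finset.mul_sum]
          exact Finset.sum_congr rfl (fun j _ => by ring)
      _ = _ := by rw [Finset.sum_comm]
  rw [rearr, Finset.sum_congr rfl (fun j _ => margB j), Finset.sum_const,
      Finset.card_univ, Fintype.card_fin, nsmul_eq_mul]
  push_cast
  rw [show (1 / (2:ℝ) ^ R) * ((2:ℝ) ^ R *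
        (s * (1 - ∑ x, P x * ⟪A x, σ x⟫) + t * (((2:ℝ) ^ R - 1) * Q)))
      = s * (1 - ∑ x, P x * ⟪A x, σ x⟫) + t * (((2:ℝ) ^ R - 1) * Q) by
    field_simp]
  nlinarith [mul_nonneg ht0.le hQ0]
end
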